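/- Duality exchanges flattening points and vertices: for a generic polygon X (no four consecutive nodes coplanar) with parallel transversal field U and dual pair (Y,V), the node i is a flattening point of X (Δ(i-1/2)·Δ(i+1/2) < 0) if and only if the edge i is a vertex of (Y,V) (b(Y,V)'(i-1/2)·b(Y,V)'(i+1/2) < 0). -/

import Mathlib

/-! With `α(j) = det(X(j-1), X(j), X(j+1)) > 0` and `β(j) = det(X(j), X(j+1), U(j)) > 0`, one has
`(b(Y,V)(j+1) - b(Y,V)(j)) · α(j) · α(j+1) = β(j) · Δ(j+1/2)`, so `b(Y,V)'(j+1/2)` and `Δ(j+1/2)`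
have the same sign for every `j`, and a sign change of one sequence at `i` is one of the other.

The identity comes from Cramer's rule: the duality conditions determine `Y(j-1)` and `V(j-1)`
by determinants in `X(j-1), X(j), U(j-1)`, and pairing the dual parallelism relation with
`X(j+1)` gives `b(Y,V)(j) · α(j) = det(X(j) - X(j-1), U(j-1), X(j-1) - X(j+1))`. Subtracting two
consecutive instances, with `U(j) - U(j-1)` parallel to `X(j) - X(j-1)`, is a polynomial identity. -/

open Matrix

noncomputable def det3 (a b c : Fin 3 → ℝ) : ℝ := Matrix.det (Matrix.of ![a, b, c])

lemma det3_eq (a b c : Fin 3 → ℝ) :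
    det3 a b c = a 0 * (b 1 * c 2 - b 2 * c 1) - a 1 * (b 0 * c 2 - b 2 * c 0)
      + a 2 * (b 0 * c 1 - b 1 * c 0) := by
  simp only [det3, det_fin_three, of_apply, Matrix.cons_val, Matrix.cons_val_zero,
    Matrix.cons_val_one]
  ring

lemma dotProduct_mul_det3 (a b c w y : Fin 3 → ℝ) :
    (y ⬝ᵥ w) * det3 a b c =
      (y ⬝ᵥ a) * det3 w b c + (y ⬝ᵥ b) * det3 a w c + (y ⬝ᵥ c) * det3 a b w := by
  simp only [det3_eq, vec3_dotProduct]
  ring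

lemma mul_det3_eq_of_dual {x₀ x₁ x₂ u y₀ v₀ y₁ v₁ : Fin 3 → ℝ} {c : ℝ}
    (hy₀e : y₀ ⬝ᵥ (x₁ - x₀) = 0) (hy₀u : y₀ ⬝ᵥ u = 1) (hy₀x : y₀ ⬝ᵥ x₀ = 0)
    (hv₀e : v₀ ⬝ᵥ (x₁ - x₀) = 0) (hv₀u : v₀ ⬝ᵥ u = 0) (hv₀x : v₀ ⬝ᵥ x₀ = 1)
    (hy₁ : y₁ ⬝ᵥ x₂ = 0) (hv₁ : v₁ ⬝ᵥ x₂ = 1) (hvy : v₁ - v₀ = -c • (y₁ - y₀)) :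
    c * det3 x₀ x₁ x₂ = det3 (x₁ - x₀) u (x₀ - x₂) := by
  have hy₀ := dotProduct_mul_det3 (x₁ - x₀) u x₀ x₂ y₀
  have hv₀ := dotProduct_mul_det3 (x₁ - x₀) u x₀ x₂ v₀
  rw [hy₀e, hy₀u, hy₀x] at hy₀
  rw [hv₀e, hv₀u, hv₀x] at hv₀
  have hpair := congrArg (· ⬝ᵥ x₂) hvy
  simp only [sub_dotProduct, smul_dotProduct, smul_eq_mul, hy₁, hv₁] at hpair
  linear_combination (norm := skip) -c * hy₀ - hv₀ - det3 (x₁ - x₀) u x₀ * hpair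
  simp only [det3_eq, Pi.sub_apply]
  ring

lemma sub_mul_det3_eq_of_parallel {x₀ x₁ x₂ x₃ u₀ u₁ : Fin 3 → ℝ} {β c₁ c₂ : ℝ}
    (hu : u₁ - u₀ = -β • (x₁ - x₀))
    (h₁ : c₁ * det3 x₀ x₁ x₂ = det3 (x₁ - x₀) u₀ (x₀ - x₂))
    (h₂ : c₂ * det3 x₁ x₂ x₃ = det3 (x₂ - x₁) u₁ (x₁ - x₃)) :
    (c₂ - c₁) * (det3 x₀ x₁ x₂ * det3 x₁ x₂ x₃) =
      det3 x₁ x₂ u₁ * det3 (x₃ - x₂) (x₂ - x₁) (x₁ - x₀) := by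
  obtain rfl : u₁ = u₀ + -β • (x₁ - x₀) := eq_add_of_sub_eq' hu
  linear_combination (norm := skip) det3 x₀ x₁ x₂ * h₂ - det3 x₁ x₂ x₃ * h₁
  simp only [det3_eq, Pi.add_apply, Pi.sub_apply, Pi.smul_apply, smul_eq_mul]
  ring

section Polygon

variable {X U Y V : ℤ → Fin 3 → ℝ} {b bYV : ℤ → ℝ}

lemma dualCurvature_mul_det3
    (hY1 : ∀ j, Y j ⬝ᵥ (X (j + 1) - X j) = 0) (hY2 : ∀ j, Y j ⬝ᵥ U j = 1)
    (hY3 : ∀ j, Y j ⬝ᵥ X j = 0) (hV1 : ∀ j, V j ⬝ᵥ (X (j + 1) - X j) = 0)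
    (hV2 : ∀ j, V j ⬝ᵥ U j = 0) (hV3 : ∀ j, V j ⬝ᵥ X j = 1)
    (hdualpar : ∀ j, V j - V (j - 1) = -bYV j • (Y j - Y (j - 1))) (j : ℤ) :
    bYV j * det3 (X (j - 1)) (X j) (X (j + 1)) =
      det3 (X j - X (j - 1)) (U (j - 1)) (X (j - 1) - X (j + 1)) := by
  have hY1' := hY1 (j - 1)
  have hV1' := hV1 (j - 1)
  rw [sub_add_cancel] at hY1' hV1'
  have hYnext : Y j ⬝ᵥ X (j + 1) = 0 := by
    simpa [dotProduct_sub, hY3 j] using hY1 j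
  have hVnext : V j ⬝ᵥ X (j + 1) = 1 := by
    simpa [dotProduct_sub, hV3 j, sub_eq_zero] using hV1 j
  exact mul_det3_eq_of_dual hY1' (hY2 _) (hY3 _) hV1' (hV2 _) (hV3 _) hYnext hVnext (hdualpar j)

lemma sign_dualCurvature_sub
    (hconv : ∀ j, 0 < det3 (X (j - 1)) (X j) (X (j + 1)))
    (htrans : ∀ j, 0 < det3 (X j) (X (j + 1)) (U j))
    (hpar : ∀ j, U (j + 1) - U j = -b j • (X (j + 1) - X j))
    (hb : ∀ j, bYV j * det3 (X (j - 1)) (X j) (X (j + 1)) =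
      det3 (X j - X (j - 1)) (U (j - 1)) (X (j - 1) - X (j + 1))) (j : ℤ) :
    SignType.sign (bYV (j + 1) - bYV j) =
      SignType.sign (det3 (X (j + 2) - X (j + 1)) (X (j + 1) - X j) (X j - X (j - 1))) := by
  have hpar' := hpar (j - 1)
  have hb' := hb (j + 1)
  have hconv' := hconv (j + 1)
  rw [sub_add_cancel] at hpar'
  rw [add_sub_cancel_right, add_assoc, one_add_one_eq_two] at hb' hconv'
  have hkey := congrArg SignType.sign (sub_mul_det3_eq_of_parallel hpar' (hb j) hb')
  simpa only [sign_mul, sign_pos (hconv j), sign_pos hconv', sign_pos (htrans j), mul_one,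
    one_mul] using hkey

end Polygon

theorem flattening_iff_dual_vertex_general
    (X U Y V : ℤ → Fin 3 → ℝ) (b bYV : ℤ → ℝ)
    (hconv : ∀ j, 0 < det3 (X (j - 1)) (X j) (X (j + 1)))
    (htrans : ∀ j, 0 < det3 (X j) (X (j + 1)) (U j))
    (hpar : ∀ j, U (j + 1) - U j = -b j • (X (j + 1) - X j))
    (hY1 : ∀ j, Y j ⬝ᵥ (X (j + 1) - X j) = 0)
    (hY2 : ∀ j, Y j ⬝ᵥ U j = 1)
    (hY3 : ∀ j, Y j ⬝ᵥ X j = 0)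
    (hV1 : ∀ j, V j ⬝ᵥ (X (j + 1) - X j) = 0)
    (hV2 : ∀ j, V j ⬝ᵥ U j = 0)
    (hV3 : ∀ j, V j ⬝ᵥ X j = 1)
    (hdualpar : ∀ j, V j - V (j - 1) = -bYV j • (Y j - Y (j - 1)))
    (i : ℤ) :
    det3 (X (i + 1) - X i) (X i - X (i - 1)) (X (i - 1) - X (i - 2)) *
        det3 (X (i + 2) - X (i + 1)) (X (i + 1) - X i) (X i - X (i - 1)) < 0 ↔
      (bYV i - bYV (i - 1)) * (bYV (i + 1) - bYV i) < 0 := by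
  have hsign := sign_dualCurvature_sub hconv htrans hpar
    (dualCurvature_mul_det3 hY1 hY2 hY3 hV1 hV2 hV3 hdualpar)
  have hprev := hsign (i - 1)
  rw [sub_add_cancel, show i - 1 + 2 = i + 1 by ring, show i - 1 - 1 = i - 2 by ring] at hprev
  rw [← sign_eq_neg_one_iff, ← sign_eq_neg_one_iff, sign_mul, sign_mul, hprev,
    hsign i]

/-- for a generic polygon, node i is a flattening point of X iff
edge i is a vertex of the dual pair (Y,V). -/
theorem flattening_iff_dual_vertex
    (X U Y V : ℤ → Fin 3 → ℝ) (b bYV : ℤ → ℝ)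
    (hconv : ∀ j, 0 < det3 (X (j - 1)) (X j) (X (j + 1)))
    (htrans : ∀ j, 0 < det3 (X j) (X (j + 1)) (U j))
    (hpar : ∀ j, U (j + 1) - U j = -b j • (X (j + 1) - X j))
    (hgen : ∀ j, det3 (X (j + 2) - X (j + 1)) (X (j + 1) - X j) (X j - X (j - 1)) ≠ 0)
    (hY1 : ∀ j, Y j ⬝ᵥ (X (j + 1) - X j) = 0)
    (hY2 : ∀ j, Y j ⬝ᵥ U j = 1)
    (hY3 : ∀ j, Y j ⬝ᵥ X j = 0)
    (hV1 : ∀ j, V j ⬝ᵥ (X (j + 1) - X j) = 0)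
    (hV2 : ∀ j, V j ⬝ᵥ U j = 0)
    (hV3 : ∀ j, V j ⬝ᵥ X j = 1)
    (hdualpar : ∀ j, V j - V (j - 1) = -bYV j • (Y j - Y (j - 1)))
    (i : ℤ) :
    det3 (X (i + 1) - X i) (X i - X (i - 1)) (X (i - 1) - X (i - 2)) *
        det3 (X (i + 2) - X (i + 1)) (X (i + 1) - X i) (X i - X (i - 1)) < 0 ↔
      (bYV i - bYV (i - 1)) * (bYV (i + 1) - bYV i) < 0 :=
  flattening_iff_dual_vertex_general X U Y V b bYV hconv htrans hpar hY1 hY2 hY3 hV1 hV2 hV3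
    hdualpar i
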